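/- arXiv:2409.02477 — 2 statements merged into one kernel-verified Lean document; each statement's English description precedes it below -/
import Mathlib

section
/- The forward recursion of the joint-probability forward algorithm is correct: a_1(s) = π(s) for every state s, and for every 2 ≤ i ≤ L and every state s, a_i(s) = Σ_t b_{i-1}(t) · T(t,s), where b_{i-1}(t) = a_{i-1}(t) · E(x_{i-1},t). -/
open Finset

/-- The forward quantity `a_i(s)` of a hidden Markov model, defined by prefix sums:
`fwd π T E x i s` is the paper's `a_{i+1}(s)`, i.e. the sum over hidden prefixes
`σ ∈ S^{i+1}` with last state `s` of `π(σ_1) ∏_{j=2}^{i+1} T(σ_{j-1},σ_j)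
∏_{j=1}^{i} E(x_j,σ_j)`.  Here `x : ℕ → X` with `x j` the paper's `x_{j+1}`. -/
noncomputable def fwd {S X : Type*} [Fintype S] [DecidableEq S]
    (π : S → ℝ) (T : S → S → ℝ) (E : X → S → ℝ) (x : ℕ → X) (i : ℕ) (s : S) : ℝ :=
  ∑ σ : Fin (i + 1) → S,
    if σ (Fin.last i) = s then
      π (σ 0) * (∏ j : Fin i, T (σ j.castSucc) (σ j.succ)) *
        ∏ j : Fin i, E (x j) (σ j.castSucc)
    else 0

/-- The forward recursion of the joint-probability forward algorithm is
correct: `a_1(s) = π(s)` for every state `s`, and for every `2 ≤ i ≤ L` and every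
state `s`, `a_i(s) = Σ_t b_{i-1}(t) · T(t,s)` where `b_{i-1}(t) = a_{i-1}(t) · E(x_{i-1},t)`.
(In the indexing of `fwd`, the paper's index `i` is `k + 2` for `k : ℕ`.) -/
theorem hmm_forward_recursion {S X : Type*} [Fintype S] [DecidableEq S] [Fintype X]
    (π : S → ℝ) (T : S → S → ℝ) (E : X → S → ℝ)
    (hπ0 : ∀ s, 0 ≤ π s) (hπ1 : ∑ s, π s = 1)
    (hT0 : ∀ s t, 0 ≤ T s t) (hT1 : ∀ s, ∑ t, T s t = 1)
    (hE0 : ∀ x s, 0 ≤ E x s) (hE1 : ∀ s, ∑ x, E x s = 1)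
    (L : ℕ) (hL : 1 ≤ L) (x : ℕ → X) :
    (∀ s : S, fwd π T E x 0 s = π s) ∧
      (∀ k : ℕ, k + 2 ≤ L → ∀ s : S,
        fwd π T E x (k + 1) s = ∑ t, (fwd π T E x k t * E (x k) t) * T t s) := by
  constructor
  · intro s
    rw [fwd, Fintype.sum_equiv (Equiv.funUnique (Fin 1) S) _
      (fun t => if t = s then π t else 0)]
    · simp
    · intro σ; simp [Fin.last]
  · intro k _ s
    have hrhs : ∀ t : S, (fwd π T E x k t * E (x k) t) * T t s
        = ∑ σ : Fin (k+1) → S, if σ (Fin.last k) = t then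
            (π (σ 0) * (∏ j : Fin k, T (σ j.castSucc) (σ j.succ)) *
              ∏ j : Fin k, E (x j) (σ j.castSucc)) * E (x k) (σ (Fin.last k)) *
              T (σ (Fin.last k)) s else 0 := by
      intro t
      rw [fwd, Finset.sum_mul, Finset.sum_mul]
      refine Finset.sum_congr rfl fun σ _ => ?_
      by_cases h : σ (Fin.last k) = t <;> simp [h]
    rw [funext hrhs, Finset.sum_comm]
    have hlhs : fwd π T E x (k+1) s
        = ∑ σ : Fin (k+1) → S,
            (π (σ 0) * (∏ j : Fin k, T (σ j.castSucc) (σ j.succ)) *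
              ∏ j : Fin k, E (x j) (σ j.castSucc)) * E (x k) (σ (Fin.last k)) *
              T (σ (Fin.last k)) s := by
      rw [fwd, ← Equiv.sum_comp (Fin.snocEquiv (fun _ : Fin (k+1+1) => S))
        (fun σ : Fin (k+1+1) → S => if σ (Fin.last (k+1)) = s then
          π (σ 0) * (∏ j : Fin (k+1), T (σ j.castSucc) (σ j.succ)) *
            ∏ j : Fin (k+1), E (x j) (σ j.castSucc) else 0)]
      rw [Fintype.sum_prod_type, Finset.sum_comm]
      refine Finset.sum_congr rfl fun σ _ => ?_
      have hs : ∀ t : S, (Fin.snocEquiv (fun _ : Fin (k+1+1) => S) (t, σ)) = Fin.snoc σ t := by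
        intro t; rfl
      simp only [hs, Fin.snoc_last]
      rw [Finset.sum_ite_eq' Finset.univ s]
      simp only [Finset.mem_univ, if_true]
      have h0 : (Fin.snoc σ s : Fin (k+1+1) → S) 0 = σ 0 := by
        have : (0 : Fin (k+1+1)) = Fin.castSucc 0 := rfl
        rw [this, Fin.snoc_castSucc]
      rw [h0, Fin.prod_univ_castSucc (f := fun j : Fin (k+1) =>
          T ((Fin.snoc σ s : Fin (k+1+1) → S) j.castSucc) ((Fin.snoc σ s : Fin (k+1+1) → S) j.succ)),
        Fin.prod_univ_castSucc (f := fun j : Fin (k+1) =>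
          E (x j) ((Fin.snoc σ s : Fin (k+1+1) → S) j.castSucc))]
      simp only [Fin.snoc_castSucc, Fin.succ_last, Fin.snoc_last, Fin.coe_castSucc,
        Fin.succ_castSucc, Fin.val_last]
      ring
    rw [hlhs]
    refine Finset.sum_congr rfl fun σ _ => ?_
    rw [Finset.sum_ite_eq]
    simp
end

section
/- The backward (smoothing) recursion is correct: assume the likelihood Z := Σ_{σ ∈ S^L} P_θ(σ,x) is positive, and for 2 ≤ i ≤ L define the smoothing probability δ_i(s,t) := (1/Z) Σ_{σ ∈ S^L, σ_{i-1}=s, σ_i=t} P_θ(σ,x) and the marginal posterior φ_i(t) := (1/Z) Σ_{σ ∈ S^L, σ_i=t} P_θ(σ,x). Then for every 2 ≤ i ≤ L and all states s, t with α_i(t) > 0 (where α_i(t) = a_i(t)/Σ_u b_{i-1}(u) and β_{i-1}(s) = b_{i-1}(s)/Σ_u b_{i-1}(u)), one has δ_i(s,t) = T(s,t) · (β_{i-1}(s)/α_i(t)) · φ_i(t). -/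
open Finset

/-- The joint probability `P_θ(σ,x)` of a hidden Markov model of length `n+1`. -/
noncomputable def joint {S X : Type*} (π : S → ℝ) (T : S → S → ℝ) (E : X → S → ℝ)
    (x : ℕ → X) (n : ℕ) (σ : Fin (n + 1) → S) : ℝ :=
  π (σ 0) * (∏ j : Fin n, T (σ j.castSucc) (σ j.succ)) *
    ∏ j : Fin (n + 1), E (x j) (σ j)

/-!
Cutting a path between positions `i - 1` and `i` factors its joint probability as
(prefix weight) · `T(σ_{i-1}, σ_i)` · (suffix weight). Summing over the paths through the edge
`(s, t)` gives `b_{i-1}(s) · T(s, t) · B(t)`, with `B(t)` the total weight of the suffixes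
starting at `t`; summing over the paths through `t` at position `i` gives, by the forward
recursion `a_i(t) = Σ_u b_{i-1}(u) T(u, t)`, the value `a_i(t) · B(t)`. The factor `B(t)` cancels
in the ratio, and so do the normalisations `Z` and `Σ_u b_{i-1}(u)`.
-/

theorem Fin.prod_append_adjacent {α M : Type*} [CommMonoid M] {a b : ℕ} (f : α → α → M)
    (p : Fin (a + 1) → α) (q : Fin (b + 1) → α) :
    ∏ j : Fin (a + 1 + b),
        f ((Fin.append p q : Fin (a + 1 + (b + 1)) → α) j.castSucc) (Fin.append p q j.succ) =
      (∏ j : Fin a, f (p j.castSucc) (p j.succ)) * f (p (Fin.last a)) (q 0) *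
        ∏ j : Fin b, f (q j.castSucc) (q j.succ) := by
  rw [Fin.prod_univ_add, Fin.prod_univ_castSucc]
  congr 2
  · refine prod_congr rfl fun j _ => ?_
    exact congrArg₂ f (Fin.append_left p q j.castSucc) (Fin.append_left p q j.succ)
  · exact congrArg₂ f (Fin.append_left p q (Fin.last a)) (Fin.append_right p q 0)
  · funext j
    exact congrArg₂ f (Fin.append_right p q j.castSucc) (Fin.append_right p q j.succ)

theorem Fintype.sum_fin_fun_eq_sum_sum_append {α M : Type*} [Fintype α] [AddCommMonoid M]
    {a b : ℕ} (F : (Fin (a + b + 1) → α) → M) :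
    ∑ σ, F σ = ∑ p : Fin a → α, ∑ q : Fin (b + 1) → α,
      F (Fin.append p q : Fin (a + (b + 1)) → α) :=
  ((Fin.appendEquiv a (b + 1)).sum_comp F).symm.trans (Fintype.sum_prod_type _)

theorem Finset.sum_mul_eq_sum_mul_sum_fiberwise {ι κ R : Type*} [Fintype ι] [Fintype κ]
    [DecidableEq κ] [NonUnitalNonAssocSemiring R] (g : ι → κ) (F : κ → R) (A : ι → R) :
    ∑ i, F (g i) * A i = ∑ c, F c * ∑ i with g i = c, A i := by
  rw [← sum_fiberwise univ g]
  refine sum_congr rfl fun c _ => ?_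
  rw [mul_sum]
  exact sum_congr rfl fun i hi => by rw [(mem_filter.1 hi).2]

section Smoothing

variable {S X : Type*} (π : S → ℝ) (T : S → S → ℝ) (E : X → S → ℝ) (x : ℕ → X)

noncomputable def prefixWeight (k : ℕ) (p : Fin (k + 1) → S) : ℝ :=
  π (p 0) * (∏ j : Fin k, T (p j.castSucc) (p j.succ)) * ∏ j : Fin (k + 1), E (x j) (p j)

noncomputable def suffixWeight (k m : ℕ) (q : Fin (m + 1) → S) : ℝ :=
  (∏ j : Fin m, T (q j.castSucc) (q j.succ)) * ∏ j : Fin (m + 1), E (x (k + 1 + j)) (q j)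

theorem joint_append (k m : ℕ) (p : Fin (k + 1) → S) (q : Fin (m + 1) → S) :
    joint π T E x (k + 1 + m) (Fin.append p q : Fin (k + 1 + (m + 1)) → S) =
      prefixWeight π T E x k p * T (p (Fin.last k)) (q 0) * suffixWeight T E x k m q := by
  have emissions : ∏ j : Fin (k + 1 + m + 1), E (x j) (Fin.append p q j) =
      (∏ j : Fin (k + 1), E (x j) (p j)) * ∏ j : Fin (m + 1), E (x (k + 1 + j)) (q j) :=
    (Fin.prod_univ_add fun j : Fin (k + 1 + (m + 1)) => E (x j) (Fin.append p q j)).trans <| by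
      simp only [Fin.append_left, Fin.append_right, Fin.val_castAdd, Fin.val_natAdd]
  rw [joint, Fin.prod_append_adjacent, emissions, prefixWeight, suffixWeight,
    show (Fin.append p q : Fin (k + 1 + (m + 1)) → S) 0 = p 0 from Fin.append_left p q 0]
  ring

variable [Fintype S] [DecidableEq S]

theorem sum_prefixWeight_of_last_eq (k : ℕ) (u : S) :
    ∑ p : Fin (k + 1) → S with p (Fin.last k) = u, prefixWeight π T E x k p =
      fwd π T E x k u * E (x k) u := by
  rw [fwd, sum_mul, sum_filter]
  refine sum_congr rfl fun p _ => ?_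
  split_ifs with hp
  · rw [prefixWeight, Fin.prod_univ_castSucc, hp]
    simp only [Fin.val_castSucc, Fin.val_last]
    ring
  · rw [zero_mul]

theorem fwd_succ_eq_sum_prefixWeight (k : ℕ) (t : S) :
    fwd π T E x (k + 1) t =
      ∑ p : Fin (k + 1) → S, T (p (Fin.last k)) t * prefixWeight π T E x k p := by
  rw [fwd, ← (Fin.snocEquiv fun _ => S).sum_comp, Fintype.sum_prod_type_right]
  refine sum_congr rfl fun p _ => ?_
  simp only [Fin.snocEquiv, Equiv.coe_fn_mk, Fin.snoc_last, Fin.snoc_apply_zero,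
    Fin.prod_univ_castSucc, Fin.succ_last, Fin.val_castSucc, Fin.val_last, sum_ite_eq', mem_univ,
    if_true, prefixWeight, Fin.succ_castSucc, Fin.snoc_castSucc]
  ring

theorem fwd_succ (k : ℕ) (t : S) :
    fwd π T E x (k + 1) t = ∑ u, fwd π T E x k u * E (x k) u * T u t := by
  rw [fwd_succ_eq_sum_prefixWeight,
    sum_mul_eq_sum_mul_sum_fiberwise (fun p : Fin (k + 1) → S => p (Fin.last k)) (T · t)]
  simp_rw [sum_prefixWeight_of_last_eq, mul_comm]

noncomputable def bwd (k m : ℕ) (t : S) : ℝ :=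
  ∑ q : Fin (m + 1) → S with q 0 = t, suffixWeight T E x k m q

theorem sum_mul_joint_eq_sum_fwd_bwd (k m : ℕ) (g : S → S → ℝ) :
    ∑ σ : Fin (k + 1 + m + 1) → S,
        g (σ ⟨k, by omega⟩) (σ ⟨k + 1, by omega⟩) * joint π T E x (k + 1 + m) σ =
      ∑ u, ∑ v, g u v * (fwd π T E x k u * E (x k) u * T u v * bwd T E x k m v) := by
  have append_at_k (p : Fin (k + 1) → S) (q : Fin (m + 1) → S) :
      (Fin.append p q : Fin (k + 1 + (m + 1)) → S) ⟨k, by omega⟩ = p (Fin.last k) :=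
    Fin.append_left p q (Fin.last k)
  have append_at_succ_k (p : Fin (k + 1) → S) (q : Fin (m + 1) → S) :
      (Fin.append p q : Fin (k + 1 + (m + 1)) → S) ⟨k + 1, by omega⟩ = q 0 :=
    Fin.append_right p q 0
  rw [Fintype.sum_fin_fun_eq_sum_sum_append]
  simp only [append_at_k, append_at_succ_k, joint_append]
  calc _ = ∑ p : Fin (k + 1) → S, (∑ q : Fin (m + 1) → S,
          g (p (Fin.last k)) (q 0) * T (p (Fin.last k)) (q 0) * suffixWeight T E x k m q) *
            prefixWeight π T E x k p := by
        simp only [sum_mul]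
        exact sum_congr rfl fun p _ => sum_congr rfl fun q _ => by ring
    _ = ∑ p : Fin (k + 1) → S, (∑ v, g (p (Fin.last k)) v * T (p (Fin.last k)) v * bwd T E x k m v) *
            prefixWeight π T E x k p := by
        refine sum_congr rfl fun p _ => ?_
        rw [sum_mul_eq_sum_mul_sum_fiberwise (fun q : Fin (m + 1) → S => q 0)
          (fun v => g (p (Fin.last k)) v * T (p (Fin.last k)) v)]
        rfl
    _ = ∑ u, (∑ v, g u v * T u v * bwd T E x k m v) * (fwd π T E x k u * E (x k) u) := by
        rw [sum_mul_eq_sum_mul_sum_fiberwise (fun p : Fin (k + 1) → S => p (Fin.last k))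
          (fun u => ∑ v, g u v * T u v * bwd T E x k m v)]
        simp only [sum_prefixWeight_of_last_eq]
    _ = _ := by
        simp only [sum_mul]
        exact sum_congr rfl fun u _ => sum_congr rfl fun v _ => by ring

theorem sum_joint_through_edge (k m : ℕ) (s t : S) :
    ∑ σ : Fin (k + 1 + m + 1) → S,
        (if σ ⟨k, by omega⟩ = s ∧ σ ⟨k + 1, by omega⟩ = t then joint π T E x (k + 1 + m) σ else 0) =
      fwd π T E x k s * E (x k) s * T s t * bwd T E x k m t := by
  simpa [ite_and] using sum_mul_joint_eq_sum_fwd_bwd π T E x k m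
    (fun u v => if u = s ∧ v = t then 1 else 0)

theorem sum_joint_through_state (k m : ℕ) (t : S) :
    ∑ σ : Fin (k + 1 + m + 1) → S,
        (if σ ⟨k + 1, by omega⟩ = t then joint π T E x (k + 1 + m) σ else 0) =
      fwd π T E x (k + 1) t * bwd T E x k m t := by
  rw [fwd_succ, sum_mul]
  simpa using sum_mul_joint_eq_sum_fwd_bwd π T E x k m (fun _ v => if v = t then 1 else 0)

end Smoothing

/-- The paper's `i` is `k + 2` and `L = n + 1`: positions `i - 1, i` are the indices `k, k + 1`. -/
theorem hmm_smoothing_recursion {S X : Type*} [Fintype S] [DecidableEq S]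
    (π : S → ℝ) (T : S → S → ℝ) (E : X → S → ℝ)
    (n : ℕ) (x : ℕ → X)
    (k : ℕ) (hk : k < n) (s t : S)
    (hα : 0 < fwd π T E x (k + 1) t / ∑ u, fwd π T E x k u * E (x k) u) :
    (1 / ∑ σ : Fin (n + 1) → S, joint π T E x n σ) *
        (∑ σ : Fin (n + 1) → S,
          if σ ⟨k, by omega⟩ = s ∧ σ ⟨k + 1, by omega⟩ = t then joint π T E x n σ else 0) =
      T s t *
        ((fwd π T E x k s * E (x k) s / ∑ u, fwd π T E x k u * E (x k) u) /
          (fwd π T E x (k + 1) t / ∑ u, fwd π T E x k u * E (x k) u)) *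
        ((1 / ∑ σ : Fin (n + 1) → S, joint π T E x n σ) *
          ∑ σ : Fin (n + 1) → S,
            if σ ⟨k + 1, by omega⟩ = t then joint π T E x n σ else 0) := by
  obtain ⟨m, rfl⟩ : ∃ m, n = k + 1 + m := ⟨n - (k + 1), by omega⟩
  obtain ⟨hA, hB⟩ := div_ne_zero_iff.mp hα.ne'
  rw [sum_joint_through_edge, sum_joint_through_state]
  field_simp
end
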